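/- arXiv:1508.05429 — 3 statements merged into one kernel-verified Lean document; each statement's English description precedes it below -/
import Mathlib

section
/- Let h : ℝ → ℂ be integrable and square-integrable, let T₀ ≥ 0, and suppose h(t) = 0 for all t < T₀. Then for every T with 0 ≤ T ≤ T₀, the shifted transfer function w ↦ e^{i w T} H(w), where H(w) = ∫_{-∞}^{∞} h(t) e^{-i w t} dt, is causal: for almost every real w, e^{i w T} H(w) = (1/(π i)) · p.v.∫ e^{i w' T} H(w')/(w − w') dw', the principal-value integral existing for almost every w. -/
/-!
Shifting time by `T` turns `w ↦ e^{iwT} H(w)` into the transform `G` of `g = h(· + T)`, which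
vanishes on `(-∞, 0)`. For such a causal `g`, Fubini and the substitution `w' = w ± u` give

  `∫_{ε<|w-w'|<1/ε} G(w') / (w - w') dw' = ∫ g(t) e^{-iwt} · 2i (Si(t/ε) - Si(εt)) dt`,

where `Si x = ∫₀ˣ sin t / t dt`. Since `Si` is bounded and `Si x → π/2` as `x → ∞`, the bracket is
uniformly bounded and tends to `π/2` for `t > 0`, so dominated convergence gives the limit
`π i G(w)`. The Dirichlet limit `Si x → π/2` comes from writing `1/t = ∫₀^∞ e^{-tu} du` and
integrating in `t` first.
-/

open MeasureTheory Filter Set Real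

open scoped Topology

noncomputable def sineIntegral (x : ℝ) : ℝ := ∫ t in 0..x, sinc t

@[fun_prop]
lemma continuous_sineIntegral : Continuous sineIntegral :=
  intervalIntegral.continuous_primitive (fun _ _ => continuous_sinc.intervalIntegrable _ _) 0

lemma sineIntegral_neg (x : ℝ) : sineIntegral (-x) = -sineIntegral x := by
  have := intervalIntegral.integral_comp_neg (a := 0) (b := x) sinc
  simp only [sinc_neg, neg_zero] at this
  rw [sineIntegral, sineIntegral, intervalIntegral.integral_symm, this]

lemma abs_sineIntegral_le {x : ℝ} (hx : 0 ≤ x) : |sineIntegral x| ≤ x := by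
  have := intervalIntegral.norm_integral_le_of_norm_le_const (a := 0) (b := x) (C := 1)
    (f := sinc) fun t _ => abs_sinc_le_one t
  simpa [sineIntegral, abs_of_nonneg hx] using this

lemma integral_exp_neg_mul_Ioi {t : ℝ} (ht : 0 < t) : ∫ u in Ioi 0, exp (-t * u) = t⁻¹ := by
  rw [integral_exp_mul_Ioi (neg_lt_zero.2 ht)]
  simp

lemma integral_exp_neg_mul_sin (u X : ℝ) :
    ∫ t in 0..X, exp (-t * u) * sin t
      = (1 - exp (-X * u) * (cos X + u * sin X)) / (1 + u ^ 2) := by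
  have hu : 1 + u ^ 2 ≠ 0 := by positivity
  have hderiv : ∀ t ∈ uIcc 0 X,
      HasDerivAt (fun t => -(exp (-t * u) * (cos t + u * sin t)) / (1 + u ^ 2))
        (exp (-t * u) * sin t) t := by
    intro t _
    refine (((((hasDerivAt_id t).neg).mul_const u).exp.mul
      ((hasDerivAt_cos t).add ((hasDerivAt_sin t).const_mul u))).neg.div_const _).congr_deriv ?_
    simp only [id, Pi.neg_apply, Pi.add_apply]
    field_simp
    ring
  rw [intervalIntegral.integral_eq_sub_of_hasDerivAt hderiv
    (Continuous.intervalIntegrable (by fun_prop) _ _)]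
  simp only [neg_mul, neg_zero, zero_mul, exp_zero, cos_zero, sin_zero, mul_zero, add_zero, mul_one]
  field_simp
  ring

lemma integrable_exp_neg_mul_mul_sin {X : ℝ} :
    Integrable (fun p : ℝ × ℝ => exp (-p.1 * p.2) * sin p.1)
      ((volume.restrict (Ioc 0 X)).prod (volume.restrict (Ioi 0))) := by
  have hmeas : AEStronglyMeasurable (fun p : ℝ × ℝ => exp (-p.1 * p.2) * sin p.1)
      ((volume.restrict (Ioc 0 X)).prod (volume.restrict (Ioi 0))) :=
    (by fun_prop : Continuous _).aestronglyMeasurable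
  refine (integrable_prod_iff hmeas).2 ⟨?_, ?_⟩
  · filter_upwards [ae_restrict_mem measurableSet_Ioc] with t ht
    exact (exp_neg_integrableOn_Ioi 0 ht.1).mul_const _
  · refine (integrable_const (1 : ℝ)).mono' hmeas.norm.integral_prod_right' ?_
    filter_upwards [ae_restrict_mem measurableSet_Ioc] with t ht
    simp only [norm_mul, norm_eq_abs, abs_exp]
    rw [integral_mul_const, integral_exp_neg_mul_Ioi ht.1,
      abs_of_nonneg (mul_nonneg (inv_nonneg.2 ht.1.le) (abs_nonneg _)), inv_mul_le_one₀ ht.1]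
    exact (abs_sin_le_abs).trans_eq (abs_of_pos ht.1)

lemma sineIntegral_eq_integral_Ioi {X : ℝ} (hX : 0 < X) :
    sineIntegral X = ∫ u in Ioi 0, (1 - exp (-X * u) * (cos X + u * sin X)) / (1 + u ^ 2) := by
  calc sineIntegral X = ∫ t in Ioc 0 X, ∫ u in Ioi 0, exp (-t * u) * sin t := by
        rw [sineIntegral, intervalIntegral.integral_of_le hX.le]
        refine setIntegral_congr_fun measurableSet_Ioc fun t ht => ?_
        rw [integral_mul_const, integral_exp_neg_mul_Ioi ht.1, sinc_of_ne_zero ht.1.ne',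
          inv_mul_eq_div]
    _ = ∫ u in Ioi 0, ∫ t in Ioc 0 X, exp (-t * u) * sin t :=
        integral_integral_swap integrable_exp_neg_mul_mul_sin
    _ = _ := by
        refine setIntegral_congr_fun measurableSet_Ioi fun u _ => ?_
        rw [← intervalIntegral.integral_of_le hX.le, integral_exp_neg_mul_sin]

lemma norm_exp_neg_mul_mul_div_le {X u : ℝ} (hu : 0 ≤ u) :
    ‖exp (-X * u) * (cos X + u * sin X) / (1 + u ^ 2)‖ ≤ 2 * exp (-X * u) := by
  have htrig : |cos X + u * sin X| ≤ 1 + u := by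
    calc |cos X + u * sin X| ≤ |cos X| + u * |sin X| := by
          simpa [abs_mul, abs_of_nonneg hu] using abs_add_le (cos X) (u * sin X)
      _ ≤ 1 + u * 1 := by gcongr; exacts [abs_cos_le_one X, abs_sin_le_one X]
      _ = 1 + u := by rw [mul_one]
  rw [norm_eq_abs, abs_div, abs_mul, abs_exp, abs_of_pos (by positivity : (0 : ℝ) < 1 + u ^ 2),
    div_le_iff₀ (by positivity)]
  calc exp (-X * u) * |cos X + u * sin X| ≤ exp (-X * u) * (2 * (1 + u ^ 2)) := by
        gcongr
        nlinarith [sq_nonneg (u - 1)]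
    _ = 2 * exp (-X * u) * (1 + u ^ 2) := by ring

lemma tendsto_sineIntegral_atTop : Tendsto sineIntegral atTop (𝓝 (π / 2)) := by
  let R : ℝ → ℝ := fun X => ∫ u in Ioi 0, exp (-X * u) * (cos X + u * sin X) / (1 + u ^ 2)
  have hR_le : ∀ X > 0, ‖R X‖ ≤ 2 / X := fun X hX => by
    calc ‖R X‖ ≤ ∫ u in Ioi 0, 2 * exp (-X * u) :=
          norm_integral_le_of_norm_le ((exp_neg_integrableOn_Ioi 0 hX).const_mul 2)
            ((ae_restrict_mem measurableSet_Ioi).mono fun u hu =>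
              norm_exp_neg_mul_mul_div_le (le_of_lt hu))
      _ = 2 / X := by rw [integral_const_mul, integral_exp_neg_mul_Ioi hX, div_eq_mul_inv]
  have hR : Tendsto R atTop (𝓝 0) :=
    squeeze_zero_norm' (eventually_gt_atTop 0 |>.mono hR_le)
      (tendsto_const_nhds.div_atTop tendsto_id)
  have hsplit : ∀ X > 0, sineIntegral X = π / 2 - R X := fun X hX => by
    have hrem : IntegrableOn (fun u => exp (-X * u) * (cos X + u * sin X) / (1 + u ^ 2)) (Ioi 0) :=
      ((exp_neg_integrableOn_Ioi 0 hX).const_mul 2).mono'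
        (Measurable.aestronglyMeasurable (by fun_prop))
        ((ae_restrict_mem measurableSet_Ioi).mono fun u hu =>
          norm_exp_neg_mul_mul_div_le (le_of_lt hu))
    have hπ : π / 2 = ∫ u in Ioi 0, (1 + u ^ 2)⁻¹ := by simp
    rw [sineIntegral_eq_integral_Ioi hX, hπ,
      ← integral_sub integrable_inv_one_add_sq.integrableOn hrem]
    refine setIntegral_congr_fun measurableSet_Ioi fun u _ => ?_
    field_simp
  simpa using (tendsto_const_nhds.sub hR).congr' <|
    (eventually_gt_atTop 0).mono fun X hX => (hsplit X hX).symm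

lemma exists_abs_sineIntegral_le : ∃ C, ∀ x, |sineIntegral x| ≤ C := by
  obtain ⟨A, hA⟩ := eventually_atTop.1
    (tendsto_sineIntegral_atTop.eventually (eventually_abs_sub_lt (π / 2) one_pos))
  have hnonneg : ∀ x, 0 ≤ x → |sineIntegral x| ≤ |A| + π / 2 + 1 := fun x hx => by
    rcases le_or_gt x A with hxA | hxA
    · linarith [abs_sineIntegral_le hx, le_abs_self A, pi_pos]
    · linarith [hA x hxA.le, abs_sub_abs_le_abs_sub (sineIntegral x) (π / 2),
        abs_of_pos (half_pos pi_pos), abs_nonneg A]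
  refine ⟨|A| + π / 2 + 1, fun x => ?_⟩
  rcases le_total 0 x with hx | hx
  · exact hnonneg x hx
  · simpa [sineIntegral_neg] using hnonneg (-x) (neg_nonneg.2 hx)

lemma tendsto_sineIntegral_div_sub {t : ℝ} (ht : 0 < t) :
    Tendsto (fun ε => sineIntegral (t / ε) - sineIntegral (ε * t)) (𝓝[>] 0)
      (𝓝 (π / 2)) := by
  have htop : Tendsto (fun ε : ℝ => t / ε) (𝓝[>] 0) atTop := by
    simpa only [div_eq_mul_inv] using tendsto_inv_nhdsGT_zero.const_mul_atTop ht
  have hzero : Tendsto (fun ε : ℝ => sineIntegral (ε * t)) (𝓝[>] 0) (𝓝 0) := by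
    have : Tendsto (fun ε : ℝ => sineIntegral (ε * t)) (𝓝 0) (𝓝 (sineIntegral (0 * t))) :=
      (by fun_prop : Continuous fun ε : ℝ => sineIntegral (ε * t)).tendsto 0
    simpa [sineIntegral] using this.mono_left nhdsWithin_le_nhds
  simpa using (tendsto_sineIntegral_atTop.comp htop).sub hzero

lemma integral_sin_mul_div_Ioo {ε : ℝ} (hε : 0 < ε) (hε1 : ε ≤ 1) (s : ℝ) :
    ∫ u in Ioo ε (1 / ε), sin (u * s) / u = sineIntegral (s / ε) - sineIntegral (ε * s) := by
  rcases eq_or_ne s 0 with rfl | hs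
  · simp [sineIntegral]
  have hsinc : ∀ u ∈ Ioo ε (1 / ε), sin (u * s) / u = s * sinc (u * s) := fun u hu => by
    have hu : u ≠ 0 := (hε.trans hu.1).ne'
    rw [sinc_of_ne_zero (mul_ne_zero hu hs)]
    field_simp
  have hle : ε ≤ 1 / ε := by rw [le_div_iff₀ hε]; nlinarith
  rw [setIntegral_congr_fun measurableSet_Ioo hsinc, ← integral_Ioc_eq_integral_Ioo,
    ← intervalIntegral.integral_of_le hle, intervalIntegral.integral_const_mul,
    intervalIntegral.integral_comp_mul_right _ hs, smul_eq_mul, mul_inv_cancel_left₀ hs,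
    ← intervalIntegral.integral_interval_sub_left (continuous_sinc.intervalIntegrable _ _)
      (continuous_sinc.intervalIntegrable _ _), sineIntegral, sineIntegral, one_div_mul_eq_div]

lemma setIntegral_abs_mem_Ioo {E : Type*} [NormedAddCommGroup E] [NormedSpace ℝ E] {f : ℝ → E}
    {a b : ℝ} (ha : 0 ≤ a) (hf : IntegrableOn f {u | a < |u| ∧ |u| < b}) :
    ∫ u in {u | a < |u| ∧ |u| < b}, f u = ∫ u in Ioo a b, (f u + f (-u)) := by
  have hsplit : {u : ℝ | a < |u| ∧ |u| < b} = Ioo a b ∪ Ioo (-b) (-a) := by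
    ext u
    simp only [mem_ofPred_eq, mem_union, mem_Ioo, lt_abs, abs_lt]
    grind
  rw [hsplit] at hf ⊢
  have hpos : IntegrableOn f (Ioo a b) := hf.mono_set subset_union_left
  have hneg : IntegrableOn f (Ioo (-b) (-a)) := hf.mono_set subset_union_right
  have hneg' : IntegrableOn (f ∘ Neg.neg) (Ioo a b) := by
    simpa using ((Measure.measurePreserving_neg (volume : Measure ℝ)).integrableOn_comp_preimage
      (MeasurableEquiv.neg ℝ).measurableEmbedding).2 hneg
  have hreflect : ∫ u in Ioo (-b) (-a), f u = ∫ u in Ioo a b, f (-u) := by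
    simpa using ((Measure.measurePreserving_neg (volume : Measure ℝ)).setIntegral_preimage_emb
      (MeasurableEquiv.neg ℝ).measurableEmbedding f (Ioo (-b) (-a))).symm
  have hdisj : Disjoint (Ioo a b) (Ioo (-b) (-a)) :=
    disjoint_left.2 fun u h₁ h₂ => by linarith [h₁.1, h₂.2]
  rw [setIntegral_union hdisj measurableSet_Ioo hpos hneg, hreflect]
  exact (integral_add hpos hneg').symm

lemma exp_div_add_exp_div_neg (w s u : ℝ) (hu : u ≠ 0) :
    Complex.exp (-(Complex.I * ↑(w + u) * s)) / (↑w - ↑(w + u))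
      + Complex.exp (-(Complex.I * ↑(w + -u) * s)) / (↑w - ↑(w + -u))
    = 2 * Complex.I * Complex.exp (-(Complex.I * w * s)) * ↑(sin (u * s) / u) := by
  have hu' : (u : ℂ) ≠ 0 := Complex.ofReal_ne_zero.2 hu
  have hplus : -(Complex.I * ↑(w + u) * s) = -(Complex.I * w * s) + -(u * s * Complex.I) := by
    push_cast; ring
  have hminus : -(Complex.I * ↑(w + -u) * s) = -(Complex.I * w * s) + u * s * Complex.I := by
    push_cast; ring
  have hden₁ : (w : ℂ) - ↑(w + u) = -u := by push_cast; ring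
  have hden₂ : (w : ℂ) - ↑(w + -u) = u := by push_cast; ring
  rw [hplus, hminus, hden₁, hden₂, Complex.exp_add, Complex.exp_add, Complex.ofReal_div,
    Complex.ofReal_sin, Complex.sin]
  push_cast
  field_simp
  ring_nf
  rw [Complex.I_sq]
  ring

lemma norm_exp_neg_I_mul_mul (a b : ℝ) : ‖Complex.exp (-(Complex.I * a * b))‖ = 1 := by
  rw [Complex.norm_exp]
  simp

lemma integral_exp_div_sub {w s ε : ℝ} (hε : 0 < ε) (hε1 : ε ≤ 1) :
    ∫ w' in {w' : ℝ | ε < |w - w'| ∧ |w - w'| < 1 / ε},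
        Complex.exp (-(Complex.I * w' * s)) / (w - w')
      = 2 * Complex.I * Complex.exp (-(Complex.I * w * s))
          * ↑(sineIntegral (s / ε) - sineIntegral (ε * s)) := by
  set g : ℝ → ℂ := fun w' => Complex.exp (-(Complex.I * w' * s)) / (w - w')
  have hpre : (w + ·) ⁻¹' {w' : ℝ | ε < |w - w'| ∧ |w - w'| < 1 / ε}
      = {u : ℝ | ε < |u| ∧ |u| < 1 / ε} := by
    ext u
    simp [abs_neg]
  have hint : IntegrableOn (fun u => g (w + u)) {u : ℝ | ε < |u| ∧ |u| < 1 / ε} := by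
    have hmeas : MeasurableSet {u : ℝ | ε < |u| ∧ |u| < 1 / ε} :=
      measurableSet_Ioo.preimage continuous_abs.measurable
    have hfin : volume {u : ℝ | ε < |u| ∧ |u| < 1 / ε} ≠ ⊤ :=
      ((measure_mono fun u hu => abs_lt.1 hu.2).trans_lt measure_Ioo_lt_top).ne
    refine Measure.integrableOn_of_bounded (M := ε⁻¹) hfin
      (Measurable.aestronglyMeasurable (by fun_prop)) ?_
    filter_upwards [ae_restrict_mem hmeas] with u hu
    have hden : (w : ℂ) - ↑(w + u) = ↑(-u) := by push_cast; ring
    rw [norm_div, norm_exp_neg_I_mul_mul, hden, Complex.norm_real, norm_eq_abs, abs_neg, one_div]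
    exact inv_anti₀ hε hu.1.le
  rw [← (measurePreserving_add_left volume w).setIntegral_preimage_emb
    (MeasurableEquiv.addLeft w).measurableEmbedding g, hpre, setIntegral_abs_mem_Ioo hε.le hint,
    setIntegral_congr_fun measurableSet_Ioo fun u hu =>
      exp_div_add_exp_div_neg w s u (hε.trans hu.1).ne',
    integral_const_mul, integral_complex_ofReal, integral_sin_mul_div_Ioo hε hε1]

section Causal

variable {g : ℝ → ℂ} {G : ℝ → ℂ}

lemma integral_div_sub_eq_integral_sineIntegral (hg : Integrable g)
    (hG : ∀ w, G w = ∫ t, g t * Complex.exp (-(Complex.I * w * t))) (w : ℝ) {ε : ℝ}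
    (hε : 0 < ε) (hε1 : ε ≤ 1) :
    ∫ w' in {w' : ℝ | ε < |w - w'| ∧ |w - w'| < 1 / ε}, G w' / (w - w')
      = ∫ t, g t * (2 * Complex.I * Complex.exp (-(Complex.I * w * t))
          * ↑(sineIntegral (t / ε) - sineIntegral (ε * t))) := by
  set A := {w' : ℝ | ε < |w - w'| ∧ |w - w'| < 1 / ε}
  have hA : MeasurableSet A :=
    measurableSet_Ioo.preimage (measurable_const.sub measurable_id).abs
  have hA_fin : volume A ≠ ⊤ := by
    refine ((measure_mono fun w' hw' => ?_).trans_lt (measure_Ioo_lt_top (a := w - 1 / ε)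
      (b := w + 1 / ε))).ne
    have := abs_lt.1 hw'.2
    constructor <;> linarith
  let F : ℝ × ℝ → ℂ := fun p =>
    g p.2 * (Complex.exp (-(Complex.I * p.1 * p.2)) / (w - p.1))
  have hF : Integrable F ((volume.restrict A).prod volume) := by
    have hconst : Integrable (fun _ : ℝ => ε⁻¹) (volume.restrict A) :=
      integrableOn_const hA_fin
    refine (hconst.mul_prod hg.norm).mono'
      (hg.1.comp_snd.mul (Measurable.aestronglyMeasurable (by fun_prop))) ?_
    filter_upwards [Measure.quasiMeasurePreserving_fst.ae (ae_restrict_mem hA)] with p hp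
    have hden : (w : ℂ) - p.1 = ↑(w - p.1) := by push_cast; ring
    rw [norm_mul, norm_div, norm_exp_neg_I_mul_mul, hden, Complex.norm_real, norm_eq_abs, mul_comm,
      one_div]
    exact mul_le_mul_of_nonneg_right (inv_anti₀ hε hp.1.le) (norm_nonneg _)
  calc ∫ w' in A, G w' / (w - w') = ∫ w' in A, ∫ t, F (w', t) := by
        refine setIntegral_congr_fun hA fun w' _ => ?_
        simp only [F, hG, ← integral_div, mul_div_assoc]
    _ = ∫ t, ∫ w' in A, F (w', t) := integral_integral_swap hF
    _ = _ := by
        congr 1 with t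
        simp only [F]
        rw [integral_const_mul, integral_exp_div_sub hε hε1]

theorem tendsto_integral_div_sub_of_causal (hg : Integrable g) (hc : ∀ t < 0, g t = 0)
    (hG : ∀ w, G w = ∫ t, g t * Complex.exp (-(Complex.I * w * t))) (w : ℝ) :
    Tendsto (fun ε : ℝ =>
        ∫ w' in {w' : ℝ | ε < |w - w'| ∧ |w - w'| < 1 / ε}, G w' / (w - w'))
      (𝓝[>] 0) (𝓝 (π * Complex.I * G w)) := by
  obtain ⟨C, hC⟩ := exists_abs_sineIntegral_le
  have hsmall : Ioo 0 1 ∈ 𝓝[>] (0 : ℝ) := Ioo_mem_nhdsGT one_pos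
  have hlim : π * Complex.I * G w
      = ∫ t, g t * (2 * Complex.I * Complex.exp (-(Complex.I * w * t)) * ↑(π / 2)) := by
    rw [hG, ← integral_const_mul]
    congr 1 with t
    push_cast
    ring
  rw [hlim]
  refine Tendsto.congr' (eventually_of_mem hsmall fun ε hε =>
    (integral_div_sub_eq_integral_sineIntegral hg hG w hε.1 hε.2.le).symm) ?_
  refine tendsto_integral_filter_of_dominated_convergence (fun t => ‖g t‖ * (2 * (2 * C)))
    (Eventually.of_forall fun ε => hg.1.mul (Continuous.aestronglyMeasurable (by fun_prop)))
    (Eventually.of_forall fun ε => Eventually.of_forall fun t => ?_) (hg.norm.mul_const _) ?_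
  · rw [norm_mul, norm_mul, norm_mul, norm_exp_neg_I_mul_mul, Complex.norm_real, norm_eq_abs]
    have hI : ‖2 * Complex.I‖ = 2 := by simp
    rw [hI, mul_one]
    gcongr
    exact (abs_sub _ _).trans (by linarith [hC (t / ε), hC (ε * t)])
  · filter_upwards [Measure.ae_ne volume 0] with t ht
    rcases ht.lt_or_gt with ht | ht
    · simp [hc t ht]
    · exact ((tendsto_sineIntegral_div_sub ht).ofReal.const_mul _).const_mul _

end Causal

theorem stmt_7_general (h : ℝ → ℂ) (hInt : Integrable h)
    (T₀ : ℝ) (hc : ∀ t : ℝ, t < T₀ → h t = 0)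
    (H : ℝ → ℂ)
    (hH : ∀ w : ℝ, H w = ∫ t : ℝ, h t * Complex.exp (-(Complex.I * w * t)))
    (T : ℝ) (hTT₀ : T ≤ T₀) :
    ∀ᵐ w : ℝ, ∃ L : ℂ,
      Tendsto (fun ε : ℝ =>
          ∫ w' in {w' : ℝ | ε < |w - w'| ∧ |w - w'| < 1 / ε},
            Complex.exp (Complex.I * w' * T) * H w' / (w - w'))
        (nhdsWithin 0 (Set.Ioi 0)) (nhds L) ∧
      Complex.exp (Complex.I * w * T) * H w = 1 / (Real.pi * Complex.I) * L := by
  have hshift : ∀ w : ℝ, Complex.exp (Complex.I * w * T) * H w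
      = ∫ t, h (t + T) * Complex.exp (-(Complex.I * w * t)) := fun w => by
    rw [hH, ← integral_const_mul, ← integral_add_right_eq_self _ T]
    congr 1 with t
    rw [mul_left_comm, ← Complex.exp_add]
    push_cast
    ring_nf
  refine Eventually.of_forall fun w =>
    ⟨π * Complex.I * (Complex.exp (Complex.I * w * T) * H w), ?_, ?_⟩
  · exact tendsto_integral_div_sub_of_causal (G := fun w => Complex.exp (Complex.I * w * T) * H w)
      (hInt.comp_add_right T) (fun t ht => hc _ (by linarith)) hshift w
  · field_simp

/-- If `h` is integrable and square-integrable, `0 ≤ T ≤ T₀` and `h t = 0`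
for `t < T₀`, then the shifted transfer function `w ↦ e^{i w T} H(w)` is
causal: for almost every real `w`, the principal-value integral exists and
`e^{i w T} H(w) = (1/(π i)) · p.v.∫ e^{i w' T} H(w')/(w − w') dw'`. -/
theorem stmt_7 (h : ℝ → ℂ) (hInt : Integrable h) (hL2 : MemLp h 2 (volume : Measure ℝ))
    (T₀ : ℝ) (hT₀ : 0 ≤ T₀) (hc : ∀ t : ℝ, t < T₀ → h t = 0)
    (H : ℝ → ℂ)
    (hH : ∀ w : ℝ, H w = ∫ t : ℝ, h t * Complex.exp (-(Complex.I * w * t)))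
    (T : ℝ) (hT0 : 0 ≤ T) (hTT₀ : T ≤ T₀) :
    ∀ᵐ w : ℝ, ∃ L : ℂ,
      Tendsto (fun ε : ℝ =>
          ∫ w' in {w' : ℝ | ε < |w - w'| ∧ |w - w'| < 1 / ε},
            Complex.exp (Complex.I * w' * T) * H w' / (w - w'))
        (nhdsWithin 0 (Set.Ioi 0)) (nhds L) ∧
      Complex.exp (Complex.I * w * T) * H w = 1 / (Real.pi * Complex.I) * L :=
  stmt_7_general h hInt T₀ hc H hH T hTT₀
end

section
/- For every real w, ∫₀^∞ e^{-i w t} e^{-t²/4} dt = √π · e^{-w²} − 2 i · D(w), where D(w) = e^{-w²} ∫₀^w e^{t²} dt is Dawson's integral. Equivalently, the transfer function H̃(w) = e^{-w²} − (2 i/√π) D(w) is the Fourier transform of the causal function t ↦ (1/√π) e^{-t²/4}·1_{t ≥ 0}. -/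
/-!
Completing the square, `e^{-iwt} e^{-t²/4} = e^{-w²} e^{-(t/2 + iw)²}`, reduces the claim to
`∫₀^∞ e^{-(u + ix)²} du = √π/2 - i ∫₀^x e^{y²} dy`. This follows from Cauchy's theorem for
`e^{-z²}` on the rectangle with corners `0` and `T + ix`: the bottom side tends to the Gaussian
integral, the left side is `i ∫₀^x e^{y²} dy`, and the right side is `O(e^{x² - T²})`.
-/

open MeasureTheory Filter Set Complex Topology

lemma norm_cexp_neg_sq_add_mul_I (c d : ℝ) :
    ‖cexp (-(c + d * I) ^ 2)‖ = Real.exp (d ^ 2 - c ^ 2) := by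
  simpa [sub_eq_neg_add, add_comm] using GaussianFourier.norm_cexp_neg_mul_sq_add_mul_I 1 d c

lemma integrableOn_Ioi_cexp_neg_sq_add_mul_I (x : ℝ) :
    IntegrableOn (fun u : ℝ => cexp (-(u + x * I) ^ 2)) (Ioi 0) := by
  simpa using (GaussianFourier.integrable_cexp_neg_mul_sq_add_real_mul_I
    (b := 1) one_pos x).integrableOn

lemma tendsto_integral_cexp_neg_sq_vertical (x : ℝ) :
    Tendsto (fun T : ℝ => ∫ y in (0 : ℝ)..x, cexp (-(T + y * I) ^ 2)) atTop (𝓝 0) := by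
  have hbound (T : ℝ) : ‖∫ y in (0 : ℝ)..x, cexp (-(T + y * I) ^ 2)‖ ≤
      Real.exp (x ^ 2 - T ^ 2) * |x - 0| := by
    refine intervalIntegral.norm_integral_le_of_norm_le_const fun y hy => ?_
    have hyx : |y - 0| ≤ |x - 0| := abs_sub_left_of_mem_uIcc (uIoc_subset_uIcc hy)
    rw [norm_cexp_neg_sq_add_mul_I, Real.exp_le_exp, sub_le_sub_iff_right, sq_le_sq]
    simpa using hyx
  have hdecay : Tendsto (fun T : ℝ => Real.exp (x ^ 2 - T ^ 2) * |x - 0|) atTop (𝓝 0) := by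
    simpa [sub_eq_add_neg] using ((Real.tendsto_exp_atBot.comp
      (tendsto_atBot_add_const_left _ (x ^ 2)
        (tendsto_neg_atTop_atBot.comp (tendsto_pow_atTop two_ne_zero)))).mul_const |x - 0|)
  exact squeeze_zero_norm hbound hdecay

theorem integral_Ioi_cexp_neg_sq_add_mul_I (x : ℝ) :
    ∫ u in Ioi (0 : ℝ), cexp (-(u + x * I) ^ 2) =
      (Real.sqrt Real.pi / 2 : ℝ) - I * (∫ y in (0 : ℝ)..x, Real.exp (y ^ 2) : ℝ) := by
  have hrect (T : ℝ) := integral_boundary_rect_eq_zero_of_differentiableOn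
    (fun z => cexp (-z ^ 2)) 0 (T + x * I) (by fun_prop)
  simp only [zero_re, zero_im, add_re, add_im, ofReal_re, ofReal_im, mul_re, mul_im, I_re, I_im,
    mul_zero, mul_one, sub_zero, add_zero, zero_add, ofReal_zero, zero_mul, smul_eq_mul] at hrect
  have hgauss : ∫ u in Ioi (0 : ℝ), cexp (-(u : ℂ) ^ 2) = (Real.sqrt Real.pi / 2 : ℝ) := by
    have h := integral_gaussian_Ioi 1
    simp only [neg_mul, one_mul, div_one] at h
    rw [← h, ← integral_complex_ofReal]
    simp [ofReal_exp]
  have hleft : ∫ y in (0 : ℝ)..x, cexp (-(y * I) ^ 2) =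
      (∫ y in (0 : ℝ)..x, Real.exp (y ^ 2) : ℝ) := by
    simp [mul_pow, ← intervalIntegral.integral_ofReal]
  have hbottom := intervalIntegral_tendsto_integral_Ioi 0
    (by simpa using integrableOn_Ioi_cexp_neg_sq_add_mul_I 0) tendsto_id
  have htop := intervalIntegral_tendsto_integral_Ioi 0
    (integrableOn_Ioi_cexp_neg_sq_add_mul_I x) tendsto_id
  have hboundary := (hbottom.add ((tendsto_integral_cexp_neg_sq_vertical x).const_mul I)).sub_const
    (I * ∫ y in (0 : ℝ)..x, cexp (-(y * I) ^ 2))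
  rw [hgauss, hleft, mul_zero, add_zero] at hboundary
  refine tendsto_nhds_unique htop (hboundary.congr fun T => ?_)
  dsimp only [id]
  linear_combination hrect T + I * hleft

/-- For every real `w`,
`∫₀^∞ e^{-i w t} e^{-t²/4} dt = √π · e^{-w²} − 2 i · D(w)` where
`D(w) = e^{-w²} ∫₀^w e^{t²} dt` is Dawson's integral; equivalently the
transfer function `H̃(w) = e^{-w²} − (2 i/√π) D(w)` is the Fourier
transform of the causal function `t ↦ (1/√π) e^{-t²/4}·1_{t ≥ 0}`. -/
theorem stmt_9 (w : ℝ) :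
    ∫ t in Set.Ioi (0 : ℝ),
        Complex.exp (-(Complex.I * w * t)) * (Real.exp (-t ^ 2 / 4) : ℂ) =
      (Real.sqrt Real.pi : ℂ) * (Real.exp (-w ^ 2) : ℂ) -
        2 * Complex.I * ((Real.exp (-w ^ 2) * ∫ t in (0 : ℝ)..w, Real.exp (t ^ 2) : ℝ) : ℂ) := by
  have hsquare (t : ℝ) : cexp (-(I * w * t)) * (Real.exp (-t ^ 2 / 4) : ℂ) =
      cexp (-w ^ 2) * cexp (-((2⁻¹ * t : ℝ) + w * I) ^ 2) := by
    rw [ofReal_exp, ← Complex.exp_add, ← Complex.exp_add]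
    congr 1
    push_cast
    linear_combination (w : ℂ) ^ 2 * I_sq
  calc ∫ t in Ioi (0 : ℝ), cexp (-(I * w * t)) * (Real.exp (-t ^ 2 / 4) : ℂ)
      = cexp (-w ^ 2) * ∫ t in Ioi (0 : ℝ), cexp (-((2⁻¹ * t : ℝ) + w * I) ^ 2) := by
        simp_rw [hsquare, integral_const_mul]
    _ = cexp (-w ^ 2) * (2 * ∫ u in Ioi (0 : ℝ), cexp (-(u + w * I) ^ 2)) := by
        rw [integral_comp_mul_left_Ioi (fun u : ℝ => cexp (-(u + w * I) ^ 2)) 0 (by norm_num),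
          mul_zero, inv_inv, real_smul, ofReal_ofNat]
    _ = _ := by
        rw [integral_Ioi_cexp_neg_sq_add_mul_I]
        push_cast
        ring
end

section
/- For every real w, the Hilbert transform of the Gaussian equals (2/√π) times Dawson's integral: the limit as ε → 0⁺ of (1/π) ∫_{|w − w'| > ε} e^{-w'²}/(w − w') dw' exists and equals (2/√π) · D(w), where D(w) = e^{-w²} ∫₀^w e^{t²} dt. Consequently the transfer function H̃(w) = e^{-w²} − (2 i/√π) D(w) satisfies the Kramers–Krönig relation Im H̃ = −H[Re H̃] and is causal. -/
/-!
Substituting `u = w - w'` and folding `u < -ε` onto `u > ε` turns the truncated integral into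
`∫_{u > ε} (e^{-(w-u)²} - e^{-(w+u)²}) / u du = 2 e^{-w²} ∫_{u > ε} e^{-u²} sinh(2wu) / u du`.
This integrand is integrable at `0`, so the limit `ε → 0⁺` is the integral `G(w)` over `(0, ∞)`.
Differentiating under the integral sign, `G'(x) = 2 ∫_0^∞ e^{-u²} cosh(2xu) du = √π e^{x²}`, and
`G(0) = 0`, hence `G(w) = √π ∫_0^w e^{t²} dt`.
-/

open MeasureTheory Filter Set

open Real Topology

theorem abs_sinh_le_abs_mul_exp_abs (a : ℝ) : |sinh a| ≤ |a| * exp |a| := by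
  rw [abs_sinh, sinh_eq]
  -- `e^b - e^{-b} = e^b (1 - e^{-2b})` and `1 - e^{-2b} ≤ 2b`
  have hlin := add_one_le_exp (-(2 * |a|))
  have hfactor : exp (-|a|) = exp |a| * exp (-(2 * |a|)) := by rw [← exp_add]; ring_nf
  nlinarith [exp_pos |a|]

theorem cosh_le_exp_abs (a : ℝ) : cosh a ≤ exp |a| := by
  rw [← cosh_abs, cosh_eq]
  linarith [exp_le_exp.2 (show -|a| ≤ |a| by linarith [abs_nonneg a])]

theorem exp_neg_sq_add_mul_eq (c u : ℝ) :
    exp (-u ^ 2 + c * u) = exp (c ^ 2 / 4) * exp (-(u - c / 2) ^ 2) := by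
  rw [← exp_add]; ring_nf

theorem integrable_exp_neg_sq_add_mul (c : ℝ) : Integrable fun u : ℝ => exp (-u ^ 2 + c * u) := by
  simp_rw [exp_neg_sq_add_mul_eq]
  have := (integrable_exp_neg_mul_sq one_pos).comp_sub_right (c / 2)
  simpa using this.const_mul (exp (c ^ 2 / 4))

theorem integral_exp_neg_sq_add_mul (c : ℝ) :
    ∫ u, exp (-u ^ 2 + c * u) = √π * exp (c ^ 2 / 4) := by
  simp_rw [exp_neg_sq_add_mul_eq]
  rw [integral_const_mul, integral_sub_right_eq_self (fun u => exp (-u ^ 2)) (c / 2)]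
  have hgauss : ∫ u : ℝ, exp (-u ^ 2) = √π := by simpa using integral_gaussian 1
  rw [hgauss, mul_comm]

theorem integral_Ioi_exp_neg_sq_mul_cosh (x : ℝ) :
    ∫ u in Ioi 0, exp (-u ^ 2) * cosh (2 * x * u) = √π / 2 * exp (x ^ 2) := by
  have hsplit : ∀ u : ℝ, exp (-u ^ 2) * cosh (2 * x * u)
      = (exp (-u ^ 2 + 2 * x * u) + exp (-u ^ 2 + (-2 * x) * u)) / 2 := by
    intro u; rw [cosh_eq, exp_add, exp_add]; ring_nf
  have hfull : ∫ u, exp (-u ^ 2) * cosh (2 * x * u) = √π * exp (x ^ 2) := by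
    simp_rw [hsplit]
    rw [integral_div, integral_add (integrable_exp_neg_sq_add_mul _)
      (integrable_exp_neg_sq_add_mul _), integral_exp_neg_sq_add_mul,
      integral_exp_neg_sq_add_mul]
    ring_nf
  have heven := integral_comp_abs (f := fun u => exp (-u ^ 2) * cosh (2 * x * u))
  have habs : ∀ u : ℝ, cosh (2 * x * |u|) = cosh (2 * x * u) := fun u => by
    rw [← cosh_abs, abs_mul, abs_abs, ← abs_mul, cosh_abs]
  simp only [sq_abs, habs, hfull] at heven
  linarith

theorem tendsto_setIntegral_Ioi_nhdsGT {E : Type*} [NormedAddCommGroup E] [NormedSpace ℝ E]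
    {f : ℝ → E} {a : ℝ} (hf : IntegrableOn f (Ioi a)) :
    Tendsto (fun ε => ∫ x in Ioi ε, f x) (𝓝[>] a) (𝓝 (∫ x in Ioi a, f x)) := by
  have hprim : ContinuousWithinAt (fun b => ∫ x in a..b, f x) (Ioi a) a := by
    have hint : IntervalIntegrable f volume a (a + 1) :=
      (intervalIntegrable_iff_integrableOn_Ioc_of_le (by linarith)).2
        (hf.mono_set Ioc_subset_Ioi_self)
    refine ((intervalIntegral.continuousOn_primitive_interval' hint left_mem_uIcc) a
      left_mem_uIcc).mono_of_mem_nhdsWithin ?_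
    rw [uIcc_of_le (by linarith)]
    exact Icc_mem_nhdsGT (by linarith)
  have := (tendsto_const_nhds (x := ∫ x in Ioi a, f x)).sub hprim.tendsto
  simp only [intervalIntegral.integral_same, sub_zero] at this
  refine this.congr' ?_
  filter_upwards [self_mem_nhdsWithin] with ε (hε : a < ε)
  rw [← intervalIntegral.integral_Ioi_sub_Ioi hf hε.le, sub_sub_cancel]

theorem setIntegral_preimage_sub_left {E : Type*} [NormedAddCommGroup E] [NormedSpace ℝ E]
    (w : ℝ) (g : ℝ → E) (s : Set ℝ) :
    ∫ x in (fun x => w - x) ⁻¹' s, g (w - x) = ∫ u in s, g u :=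
  (Measure.measurePreserving_sub_left volume w).setIntegral_preimage_emb
    (Homeomorph.subLeft w).measurableEmbedding g s

theorem setIntegral_lt_abs_eq_integral_Ioi_add_neg {E : Type*} [NormedAddCommGroup E]
    [NormedSpace ℝ E] {h : ℝ → E} {ε : ℝ} (hε : 0 ≤ ε) (hh : IntegrableOn h {u | ε < |u|}) :
    ∫ u in {u | ε < |u|}, h u = ∫ u in Ioi ε, (h u + h (-u)) := by
  have hset : {u : ℝ | ε < |u|} = Ioi ε ∪ Iio (-ε) := by ext u; simp [lt_abs, lt_neg]
  rw [hset] at hh ⊢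
  have hpos := hh.mono_set subset_union_left
  have hneg : IntegrableOn (fun u => h (-u)) (Ioi ε) := by
    have := ((Measure.measurePreserving_neg (volume : Measure ℝ)).integrableOn_comp_preimage
      (Homeomorph.neg ℝ).measurableEmbedding).2 (hh.mono_set subset_union_right)
    simpa [Function.comp_def] using this
  have hdisj : Disjoint (Ioi ε) (Iio (-ε)) :=
    Set.disjoint_left.2 fun u h₁ h₂ => by simp only [mem_Ioi, mem_Iio] at h₁ h₂; linarith
  rw [setIntegral_union hdisj measurableSet_Iio hpos (hh.mono_set subset_union_right),
    integral_add hpos hneg, integral_comp_neg_Ioi, integral_Iic_eq_integral_Iio]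

theorem MeasureTheory.Integrable.integrableOn_div_of_lt_abs {f : ℝ → ℝ} (hf : Integrable f)
    {ε : ℝ} (hε : 0 < ε) : IntegrableOn (fun u => f u / u) {u | ε < |u|} := by
  simp_rw [div_eq_mul_inv]
  refine hf.integrableOn.mul_bdd (c := ε⁻¹) (by fun_prop) ?_
  filter_upwards [ae_restrict_mem (measurableSet_lt measurable_const continuous_abs.measurable)]
    with u hu
  rw [norm_inv, Real.norm_eq_abs]
  exact inv_anti₀ hε (le_of_lt hu)

noncomputable def gaussSinhIntegral (x : ℝ) : ℝ :=
  ∫ u in Ioi 0, exp (-u ^ 2) * (sinh (2 * x * u) / u)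

theorem abs_exp_neg_sq_mul_sinh_div_le (x : ℝ) {u : ℝ} (hu : 0 < u) :
    |exp (-u ^ 2) * (sinh (2 * x * u) / u)| ≤ 2 * |x| * exp (-u ^ 2 + 2 * |x| * u) := by
  have habs : |2 * x * u| = 2 * |x| * u := by rw [abs_mul, abs_mul, abs_two, abs_of_pos hu]
  have hsinh := abs_sinh_le_abs_mul_exp_abs (2 * x * u)
  rw [habs] at hsinh
  rw [abs_mul, abs_of_pos (exp_pos _), abs_div, abs_of_pos hu, exp_add]
  calc exp (-u ^ 2) * (|sinh (2 * x * u)| / u)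
      ≤ exp (-u ^ 2) * (2 * |x| * u * exp (2 * |x| * u) / u) := by gcongr
    _ = 2 * |x| * (exp (-u ^ 2) * exp (2 * |x| * u)) := by field_simp

theorem integrableOn_exp_neg_sq_mul_sinh_div (x : ℝ) :
    IntegrableOn (fun u => exp (-u ^ 2) * (sinh (2 * x * u) / u)) (Ioi 0) := by
  refine (((integrable_exp_neg_sq_add_mul (2 * |x|)).const_mul (2 * |x|)).integrableOn).mono'
    (by fun_prop) ?_
  filter_upwards [ae_restrict_mem measurableSet_Ioi] with u hu
  exact abs_exp_neg_sq_mul_sinh_div_le x hu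

theorem hasDerivAt_gaussSinhIntegral (x₀ : ℝ) :
    HasDerivAt gaussSinhIntegral (√π * exp (x₀ ^ 2)) x₀ := by
  set B := |x₀| + 1
  have hderiv : ∀ u ≠ 0, ∀ x : ℝ, HasDerivAt (fun x => exp (-u ^ 2) * (sinh (2 * x * u) / u))
      (2 * (exp (-u ^ 2) * cosh (2 * x * u))) x := by
    intro u hu x
    refine ((((hasDerivAt_id x).const_mul 2).mul_const u).sinh.div_const u).const_mul
      (exp (-u ^ 2)) |>.congr_deriv ?_
    simp only [id]
    field_simp
  have hbound : ∀ u, 0 < u → ∀ x ∈ Metric.ball x₀ 1,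
      ‖2 * (exp (-u ^ 2) * cosh (2 * x * u))‖ ≤ 2 * exp (-u ^ 2 + 2 * B * u) := by
    intro u hu x hx
    have hxB : |x| ≤ B := by
      have := abs_sub_abs_le_abs_sub x x₀
      rw [Metric.mem_ball, Real.dist_eq] at hx
      linarith
    rw [Real.norm_of_nonneg (by positivity), exp_add]
    gcongr
    calc cosh (2 * x * u) ≤ exp |2 * x * u| := cosh_le_exp_abs _
      _ ≤ exp (2 * B * u) := by
        rw [abs_mul, abs_mul, abs_two, abs_of_pos hu]
        gcongr
  have key := hasDerivAt_integral_of_dominated_loc_of_deriv_le (μ := volume.restrict (Ioi 0))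
    (F := fun x u => exp (-u ^ 2) * (sinh (2 * x * u) / u)) (x₀ := x₀)
    (Metric.ball_mem_nhds x₀ one_pos) (Eventually.of_forall fun x => by fun_prop)
    (integrableOn_exp_neg_sq_mul_sinh_div x₀) (by fun_prop)
    ((ae_restrict_mem measurableSet_Ioi).mono fun u hu => hbound u hu)
    ((integrable_exp_neg_sq_add_mul (2 * B)).const_mul 2).integrableOn
    ((ae_restrict_mem measurableSet_Ioi).mono fun u hu x _ => hderiv u hu.ne' x)
  rw [integral_const_mul, integral_Ioi_exp_neg_sq_mul_cosh] at key
  exact key.2.congr_deriv (by ring)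

theorem gaussSinhIntegral_eq (x : ℝ) :
    gaussSinhIntegral x = √π * ∫ t in (0 : ℝ)..x, exp (t ^ 2) := by
  have hzero : gaussSinhIntegral 0 = 0 := by simp [gaussSinhIntegral]
  rw [← intervalIntegral.integral_const_mul, intervalIntegral.integral_eq_sub_of_hasDerivAt
    (fun t _ => hasDerivAt_gaussSinhIntegral t)
    ((by fun_prop : Continuous fun t => √π * exp (t ^ 2)).intervalIntegrable _ _), hzero, sub_zero]

theorem exp_neg_sub_sq_div_add_neg (w : ℝ) {u : ℝ} (hu : u ≠ 0) :
    exp (-(w - u) ^ 2) / u + exp (-(w - -u) ^ 2) / -u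
      = 2 * exp (-w ^ 2) * (exp (-u ^ 2) * (sinh (2 * w * u) / u)) := by
  have h₁ : exp (-(w - u) ^ 2) = exp (-w ^ 2) * exp (-u ^ 2) * exp (2 * w * u) := by
    rw [← exp_add, ← exp_add]; ring_nf
  have h₂ : exp (-(w - -u) ^ 2) = exp (-w ^ 2) * exp (-u ^ 2) * exp (-(2 * w * u)) := by
    rw [← exp_add, ← exp_add]; ring_nf
  rw [h₁, h₂, sinh_eq]
  field_simp
  ring

theorem setIntegral_lt_abs_sub_exp_neg_sq_div (w : ℝ) {ε : ℝ} (hε : 0 < ε) :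
    ∫ w' in {w' | ε < |w - w'|}, exp (-w' ^ 2) / (w - w')
      = ∫ u in Ioi ε, 2 * exp (-w ^ 2) * (exp (-u ^ 2) * (sinh (2 * w * u) / u)) := by
  have hshift := setIntegral_preimage_sub_left w (fun u => exp (-(w - u) ^ 2) / u) {u | ε < |u|}
  simp only [sub_sub_cancel] at hshift
  have hint : Integrable fun u : ℝ => exp (-(w - u) ^ 2) := by
    simpa using (integrable_exp_neg_mul_sq one_pos).comp_sub_left w
  refine hshift.trans ?_
  rw [setIntegral_lt_abs_eq_integral_Ioi_add_neg hε.le (hint.integrableOn_div_of_lt_abs hε)]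
  exact setIntegral_congr_fun measurableSet_Ioi fun u (hu : ε < u) =>
    exp_neg_sub_sq_div_add_neg w (hε.trans hu).ne'

theorem tendsto_setIntegral_lt_abs_sub_exp_neg_sq_div (w : ℝ) :
    Tendsto (fun ε => ∫ w' in {w' | ε < |w - w'|}, exp (-w' ^ 2) / (w - w')) (𝓝[>] 0)
      (𝓝 (2 * √π * (exp (-w ^ 2) * ∫ t in (0 : ℝ)..w, exp (t ^ 2)))) := by
  have hlim := tendsto_setIntegral_Ioi_nhdsGT
    ((integrableOn_exp_neg_sq_mul_sinh_div w).const_mul (2 * exp (-w ^ 2)))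
  rw [integral_const_mul] at hlim
  change Tendsto _ _ (𝓝 (2 * exp (-w ^ 2) * gaussSinhIntegral w)) at hlim
  rw [gaussSinhIntegral_eq] at hlim
  convert hlim.congr' ?_ using 2
  · ring
  · filter_upwards [self_mem_nhdsWithin] with ε (hε : 0 < ε)
    exact (setIntegral_lt_abs_sub_exp_neg_sq_div w hε).symm

/-- The Hilbert transform of the Gaussian equals `(2/√π)` times Dawson's
integral `D(w) = e^{-w²} ∫₀^w e^{t²} dt`: the limit as `ε → 0⁺` of
`(1/π) ∫_{|w − w'| > ε} e^{-w'²}/(w − w') dw'` exists and equals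
`(2/√π) · D(w)`.  Consequently the transfer function
`H̃(w) = e^{-w²} − (2 i/√π) D(w)` satisfies `Im H̃ = −H[Re H̃]`. -/
theorem stmt_10 (w : ℝ) :
    Tendsto (fun ε : ℝ =>
        (1 / Real.pi) * ∫ w' in {w' : ℝ | ε < |w - w'|}, Real.exp (-w' ^ 2) / (w - w'))
      (nhdsWithin 0 (Set.Ioi 0))
      (nhds ((2 / Real.sqrt Real.pi) *
        (Real.exp (-w ^ 2) * ∫ t in (0 : ℝ)..w, Real.exp (t ^ 2)))) ∧
    ((Real.exp (-w ^ 2) : ℂ) -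
        (2 * Complex.I / (Real.sqrt Real.pi : ℂ)) *
          ((Real.exp (-w ^ 2) * ∫ t in (0 : ℝ)..w, Real.exp (t ^ 2) : ℝ) : ℂ)).im =
      -((2 / Real.sqrt Real.pi) *
        (Real.exp (-w ^ 2) * ∫ t in (0 : ℝ)..w, Real.exp (t ^ 2))) := by
  refine ⟨?_, ?_⟩
  · have hπ : 1 / π * (2 * √π) = 2 / √π := by
      nth_rw 1 [← mul_self_sqrt pi_pos.le]; field_simp
    rw [← hπ, mul_assoc]
    exact (tendsto_setIntegral_lt_abs_sub_exp_neg_sq_div w).const_mul (1 / π)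
  · have hcoeff : 2 * Complex.I / (√π : ℂ) = ((2 / √π : ℝ) : ℂ) * Complex.I := by
      push_cast; ring
    rw [hcoeff]
    simp only [Complex.sub_im, Complex.mul_im, Complex.ofReal_re, Complex.ofReal_im,
      Complex.I_re, Complex.I_im]
    ring
end
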